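/- arXiv:1706.06401 — 2 statements merged into one kernel-verified Lean document; each statement's English description precedes it below -/
import Mathlib

section
/- Let g be a finite-dimensional real Lie algebra, k ⊆ g a subalgebra, m ⊆ g a complement with a symplectic form σ and compatible complex structure H satisfying the cocycle condition σ([X,Y]_m,Z)+σ([Y,Z]_m,X)+σ([Z,X]_m,Y)=0. Extend H to g by H(k) = 0. If e₁,…,e₂ₙ is a unitary basis of m (i.e. {e_i, He_i} is a symplectic basis), then for every X ∈ m, tr(ad_X) = σ(X, ξ_m), where ξ = Σᵢ[eᵢ, Heᵢ] and ξ_m is its m-component. -/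
/-!
Since `k` acts on `m`, `ad_X` maps `k` into `m`, so its trace is the trace of the compression
`π ∘ ad_X` to `m`. Computed in the symplectic basis `eᵢ, Heᵢ`, that trace is
`∑ᵢ σ([X, eᵢ]_m, Heᵢ) - σ([X, Heᵢ]_m, eᵢ)`, and the cocycle condition for the triple
`X, eᵢ, Heᵢ` turns the `i`-th summand into `-σ([eᵢ, Heᵢ]_m, X) = σ(X, [eᵢ, Heᵢ]_m)`.
-/

open Module

namespace LinearMap

theorem trace_eq_sum_dual_apply {R M ι : Type*} [CommRing R] [AddCommGroup M]
    [Module R M] [Fintype ι] [DecidableEq ι] (v : ι → M) (φ : ι → Dual R M)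
    (hspan : Submodule.span R (Set.range v) = ⊤) (hφ : ∀ i j, φ i (v j) = if i = j then 1 else 0)
    (f : M →ₗ[R] M) : trace R M f = ∑ i, φ i (f (v i)) := by
  have hli : LinearIndependent R v :=
    .of_pairwise_dual_eq_zero_one v φ (fun i j hij ↦ by simp [hφ, hij]) (fun i ↦ by simp [hφ])
  let b := Basis.mk hli hspan.ge
  have hcoord : ∀ i, b.coord i = φ i := fun i ↦ b.ext fun j ↦ by
    rw [Basis.coord_apply, b.repr_self, Basis.mk_apply, hφ, Finsupp.single_apply]
    simp only [eq_comm]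
  simp [trace_eq_matrix_trace R b, Matrix.trace, toMatrix_apply, ← hcoord, b]

theorem trace_eq_trace_comp_subtype {K V : Type*} [Field K] [AddCommGroup V] [Module K V]
    [FiniteDimensional K V] {M : Submodule K V} (π : V →ₗ[K] M) (hπ : ∀ x : M, π x = x)
    (f : V →ₗ[K] V) (hf : ∀ v, π v = 0 → f v ∈ M) :
    trace K V f = trace K M (π ∘ₗ f ∘ₗ M.subtype) := by
  set q := M.subtype ∘ₗ π
  set p := id - q
  -- `p` projects onto `ker π` along `M` and `f` maps its range into its kernel.
  have hπp : ∀ v, π (p v) = 0 := fun v ↦ by simp [p, q, hπ]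
  have hpM : ∀ x : M, p x = 0 := fun x ↦ by simp [p, q, hπ]
  have hpp : p * p = p := LinearMap.ext fun v ↦ by simp [p, q, hπ]
  have hpfp : p * (f * p) = 0 := LinearMap.ext fun v ↦ hpM ⟨f (p v), hf _ (hπp v)⟩
  have htrq : trace K V (f * q) = trace K M (π ∘ₗ f ∘ₗ M.subtype) :=
    trace_comp_comm' π (f ∘ₗ M.subtype)
  have htrp : trace K V (f * p) = 0 := by
    rw [← hpp, ← mul_assoc, trace_mul_comm, hpfp, map_zero]
  calc trace K V f = trace K V (f * q) + trace K V (f * p) := by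
        rw [← map_add, ← mul_add, add_sub_cancel]; rfl
    _ = _ := by rw [htrq, htrp, add_zero]

end LinearMap

structure IsSymplecticBasis {R V ι : Type*} [CommRing R] [AddCommGroup V] [Module R V]
    [DecidableEq ι] (σ : V →ₗ[R] V →ₗ[R] R) (e f : ι → V) : Prop where
  apply_ef : ∀ i j, σ (e i) (f j) = if i = j then 1 else 0
  apply_fe : ∀ i j, σ (f i) (e j) = -if i = j then 1 else 0
  apply_ee : ∀ i j, σ (e i) (e j) = 0
  apply_ff : ∀ i j, σ (f i) (f j) = 0
  span_eq_top : Submodule.span R (Set.range (Sum.elim e f)) = ⊤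

namespace IsSymplecticBasis

variable {R V ι : Type*} [CommRing R] [AddCommGroup V] [Module R V] [DecidableEq ι]
  {σ : V →ₗ[R] V →ₗ[R] R} {e f : ι → V}

theorem apply_eq_neg_apply_swap (hb : IsSymplecticBasis σ e f) (x y : V) :
    σ x y = -σ y x := by
  have hflip : σ.flip = -σ := by
    refine LinearMap.ext_on_range hb.span_eq_top fun s ↦
      LinearMap.ext_on_range hb.span_eq_top fun t ↦ ?_
    rcases s with i | i <;> rcases t with j | j <;>
      simp [hb.apply_ef, hb.apply_fe, hb.apply_ee, hb.apply_ff, eq_comm]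
  simpa using LinearMap.congr_fun₂ hflip y x

theorem trace_eq_sum [Fintype ι] (hb : IsSymplecticBasis σ e f) (A : V →ₗ[R] V) :
    LinearMap.trace R V A = ∑ i, (σ (A (e i)) (f i) - σ (A (f i)) (e i)) := by
  rw [LinearMap.trace_eq_sum_dual_apply (Sum.elim e f)
    (Sum.elim (fun i ↦ σ.flip (f i)) (fun i ↦ -σ.flip (e i))) hb.span_eq_top,
    Fintype.sum_sum_type]
  · simp [sub_eq_add_neg, Finset.sum_add_distrib]
  · rintro (i | i) (j | j) <;>
      simp [hb.apply_ef, hb.apply_fe, hb.apply_ee, hb.apply_ff, eq_comm]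

end IsSymplecticBasis

theorem Submodule.ker_le_of_isCompl {R V : Type*} [Ring R] [AddCommGroup V]
    [Module R V] {K M : Submodule R V} (h : IsCompl K M) (π : V →ₗ[R] M)
    (hπM : ∀ x : M, π x = x) (hπK : ∀ x ∈ K, π x = 0) : LinearMap.ker π ≤ K := by
  intro v hv
  obtain ⟨a, ha, c, hc, rfl⟩ :=
    Submodule.mem_sup.mp (h.sup_eq_top ▸ Submodule.mem_top : v ∈ K ⊔ M)
  have hc0 : (⟨c, hc⟩ : M) = 0 := by
    rw [← LinearMap.mem_ker.mp hv, map_add, hπK a ha, zero_add]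
    exact (hπM ⟨c, hc⟩).symm
  simpa [show c = 0 from congrArg Subtype.val hc0] using ha

theorem stmt_8_general (g : Type*) [LieRing g] [LieAlgebra ℝ g] [FiniteDimensional ℝ g]
    (k : LieSubalgebra ℝ g) (m : Submodule ℝ g)
    (hcompl : IsCompl k.toSubmodule m)
    (hkm : ∀ Z ∈ k, ∀ X ∈ m, ⁅Z, X⁆ ∈ m)
    (π : g →ₗ[ℝ] m) (hπm : ∀ X : m, π (X : g) = X) (hπk : ∀ X ∈ k, π X = 0)
    (σ : m →ₗ[ℝ] m →ₗ[ℝ] ℝ) (H : m →ₗ[ℝ] m)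
    (hH : ∀ X : m, H (H X) = -X)
    (hcomp : ∀ X Y : m, σ (H X) (H Y) = σ X Y)
    (hco : ∀ X Y Z : m, σ (π ⁅(X : g), (Y : g)⁆) Z + σ (π ⁅(Y : g), (Z : g)⁆) X
      + σ (π ⁅(Z : g), (X : g)⁆) Y = 0)
    (n : ℕ) (e : Fin n → m)
    (hsymp1 : ∀ i j, σ (e i) (H (e j)) = if i = j then 1 else 0)
    (hsymp2 : ∀ i j, σ (e i) (e j) = 0)
    (hsymp3 : ∀ i j, σ (H (e i)) (H (e j)) = 0)
    (hbasis : Submodule.span ℝ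
      (Set.range (Sum.elim e (fun i => H (e i)) : Fin n ⊕ Fin n → m)) = ⊤) :
    ∀ X : m, LinearMap.trace ℝ g ((LieAlgebra.ad ℝ g) (X : g))
      = σ X (π (∑ i : Fin n, ⁅((e i : m) : g), ((H (e i) : m) : g)⁆)) := by
  intro X
  have hskew : ∀ u w, σ (H u) w = -σ u (H w) := fun u w ↦ by
    simpa [hH] using (hcomp (H u) w).symm
  have hb : IsSymplecticBasis σ e (fun i ↦ H (e i)) :=
    ⟨hsymp1, fun i j ↦ by rw [hskew, hsymp1], hsymp2, hsymp3, hbasis⟩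
  have had : ∀ v, π v = 0 → ⁅(X : g), v⁆ ∈ m := fun v hv ↦ by
    rw [← lie_skew]
    exact neg_mem (hkm v (Submodule.ker_le_of_isCompl hcompl π hπm hπk hv) X X.2)
  calc LinearMap.trace ℝ g (LieAlgebra.ad ℝ g X)
      = LinearMap.trace ℝ m (π ∘ₗ LieAlgebra.ad ℝ g X ∘ₗ m.subtype) :=
        LinearMap.trace_eq_trace_comp_subtype π hπm _ had
    _ = ∑ i, (σ (π ⁅(X : g), e i⁆) (H (e i)) - σ (π ⁅(X : g), H (e i)⁆) (e i)) :=
        hb.trace_eq_sum _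
    _ = ∑ i, -σ (π ⁅(e i : g), H (e i)⁆) X := Finset.sum_congr rfl fun i _ ↦ by
        have h := hco X (e i) (H (e i))
        rw [← lie_skew ((H (e i) : m) : g) X, map_neg, map_neg, LinearMap.neg_apply] at h
        linarith
    _ = σ X (π (∑ i, ⁅(e i : g), H (e i)⁆)) := by
        rw [hb.apply_eq_neg_apply_swap X, map_sum, map_sum, LinearMap.sum_apply,
          Finset.sum_neg_distrib]

/-- For a homogeneous almost-Kähler structure determined by (g, k, m, σ, H)
with σ closed, and a unitary basis e₁,…,eₙ of m (so that {eᵢ, Heᵢ} is a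
symplectic basis), one has tr(ad_X) = σ(X, ξ_m) for every X ∈ m, where
ξ = Σᵢ [eᵢ, Heᵢ] and ξ_m is its m-component. -/
theorem stmt_8 (g : Type*) [LieRing g] [LieAlgebra ℝ g] [FiniteDimensional ℝ g]
    (k : LieSubalgebra ℝ g) (m : Submodule ℝ g)
    (hcompl : IsCompl k.toSubmodule m)
    (hkm : ∀ Z ∈ k, ∀ X ∈ m, ⁅Z, X⁆ ∈ m)
    (π : g →ₗ[ℝ] m) (hπm : ∀ X : m, π (X : g) = X) (hπk : ∀ X ∈ k, π X = 0)
    (σ : m →ₗ[ℝ] m →ₗ[ℝ] ℝ) (H : m →ₗ[ℝ] m)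
    (hH : ∀ X : m, H (H X) = -X)
    (hcomp : ∀ X Y : m, σ (H X) (H Y) = σ X Y)
    (hpos : ∀ X : m, X ≠ 0 → 0 < σ X (H X))
    (hco : ∀ X Y Z : m, σ (π ⁅(X : g), (Y : g)⁆) Z + σ (π ⁅(Y : g), (Z : g)⁆) X
      + σ (π ⁅(Z : g), (X : g)⁆) Y = 0)
    (n : ℕ) (e : Fin n → m)
    (hsymp1 : ∀ i j, σ (e i) (H (e j)) = if i = j then 1 else 0)
    (hsymp2 : ∀ i j, σ (e i) (e j) = 0)
    (hsymp3 : ∀ i j, σ (H (e i)) (H (e j)) = 0)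
    (hbasis : Submodule.span ℝ
      (Set.range (Sum.elim e (fun i => H (e i)) : Fin n ⊕ Fin n → m)) = ⊤) :
    ∀ X : m, LinearMap.trace ℝ g ((LieAlgebra.ad ℝ g) (X : g))
      = σ X (π (∑ i : Fin n, ⁅((e i : m) : g), ((H (e i) : m) : g)⁆)) :=
  stmt_8_general g k m hcompl hkm π hπm hπk σ H hH hcomp hco n e hsymp1 hsymp2 hsymp3 hbasis
end

section
/- In g = so(2n,1), let V = [[J₀,0],[0,0]] where J₀ is the standard complex structure matrix on ℝ^{2n}. Let E_i = [[0,e_i],[e_iᵗ,0]] for the standard basis e_1,…,e_{2n} of ℝ^{2n}, and for 1 ≤ i < j ≤ n set P_{ij} = (1/√2)([E_i,E_j] − [E_{i+n},E_{j+n}]) and Q_{ij} = (1/√2)([E_i,E_{j+n}] + [E_{i+n},E_j]). Then V' := Σ_{i=1}^n 2[E_i, E_{i+n}] + Σ_{1≤i<j≤n} 2[P_{ij}, Q_{ij}] equals (2n−4)·V. -/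
/-!
Writing `E_k = e_{k∞} + e_{∞k}`, one has `⁅E_k, E_l⁆ = e_{kl} - e_{lk}`, so everything reduces to
brackets of elementary skew matrices, i.e. the structure constants of `so(2n+1)`. With
`J_i = e_{i,i+n} - e_{i+n,i}` these give `⁅P_{ij}, Q_{ij}⁆ = -(J_i + J_j)`, while `V = -∑ J_i`.
Each `J_i` occurs once in the first sum with coefficient `2` and `n - 1` times in the second with
coefficient `-2`, so `V' = (2 - 2(n - 1)) • (-V) = (2n - 4) • V`.
-/

open Matrix

/-- ℝ^{2n} indexed by Fin n ⊕ Fin n; standard complex structure J₀ sending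
e_i ↦ e_{i+n} and e_{i+n} ↦ -e_i. -/
def J0mat (n : ℕ) : Matrix (Fin n ⊕ Fin n) (Fin n ⊕ Fin n) ℝ :=
  Matrix.fromBlocks 0 (-1) 1 0

/-- V = [[J₀,0],[0,0]] ∈ so(2n,1). -/
def Vmat (n : ℕ) :
    Matrix ((Fin n ⊕ Fin n) ⊕ Fin 1) ((Fin n ⊕ Fin n) ⊕ Fin 1) ℝ :=
  Matrix.fromBlocks (J0mat n) 0 0 0

/-- E_k = [[0, e_k],[e_kᵗ, 0]] ∈ so(2n,1). -/
def Emat (n : ℕ) (k : Fin n ⊕ Fin n) :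
    Matrix ((Fin n ⊕ Fin n) ⊕ Fin 1) ((Fin n ⊕ Fin n) ⊕ Fin 1) ℝ :=
  Matrix.fromBlocks 0 (Matrix.of fun a (_ : Fin 1) => if a = k then (1:ℝ) else 0)
    (Matrix.of fun (_ : Fin 1) b => if b = k then (1:ℝ) else 0) 0

/-- P_{ij} = (1/√2)([E_i,E_j] − [E_{i+n},E_{j+n}]). -/
noncomputable def Pmat (n : ℕ) (i j : Fin n) :
    Matrix ((Fin n ⊕ Fin n) ⊕ Fin 1) ((Fin n ⊕ Fin n) ⊕ Fin 1) ℝ :=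
  (Real.sqrt 2)⁻¹ •
    (⁅Emat n (Sum.inl i), Emat n (Sum.inl j)⁆ - ⁅Emat n (Sum.inr i), Emat n (Sum.inr j)⁆)

/-- Q_{ij} = (1/√2)([E_i,E_{j+n}] + [E_{i+n},E_j]). -/
noncomputable def Qmat (n : ℕ) (i j : Fin n) :
    Matrix ((Fin n ⊕ Fin n) ⊕ Fin 1) ((Fin n ⊕ Fin n) ⊕ Fin 1) ℝ :=
  (Real.sqrt 2)⁻¹ •
    (⁅Emat n (Sum.inl i), Emat n (Sum.inr j)⁆ + ⁅Emat n (Sum.inr i), Emat n (Sum.inl j)⁆)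

lemma sum_sum_filter_lt_add_add_sum {M : Type*} [AddCommMonoid M] {n : ℕ} (f : Fin n → M) :
    ∑ i, ∑ j ∈ Finset.univ.filter (fun j => i < j), (f i + f j) + ∑ i, f i = n • ∑ i, f i := by
  have hswap : ∑ i, ∑ j ∈ Finset.univ.filter (fun j => i < j), f j
      = ∑ i, ∑ _j ∈ Finset.univ.filter (fun j => j < i), f i :=
    Finset.sum_comm' (by simp)
  rw [Finset.sum_congr rfl fun i _ => Finset.sum_add_distrib, Finset.sum_add_distrib, hswap,
    ← Finset.sum_add_distrib, ← Finset.sum_add_distrib, Finset.smul_sum]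
  refine Finset.sum_congr rfl fun i _ => ?_
  rw [Finset.sum_const, Finset.sum_const, Finset.filter_lt_eq_Ioi, Finset.filter_gt_eq_Iio,
    Fin.card_Ioi, Fin.card_Iio, ← add_smul, ← succ_nsmul]
  congr 1
  omega

section

-- Local, so that the brackets in `stmt_13` keep elaborating to `Ring.instBracket`.
attribute [local instance] LieRing.ofAssociativeRing

section SkewSingle

variable {m R : Type*} [DecidableEq m] [CommRing R]

def skewSingle (a b : m) : Matrix m m R := single a b 1 - single b a 1

lemma skewSingle_swap (a b : m) : (skewSingle b a : Matrix m m R) = -skewSingle a b := by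
  simp [skewSingle]

variable [Fintype m]

lemma lie_skewSingle_skewSingle_of_left_eq {a b c : m} (hab : a ≠ b) (hac : a ≠ c)
    (hbc : b ≠ c) :
    ⁅skewSingle (R := R) a b, skewSingle (R := R) a c⁆ = -skewSingle b c := by
  simp only [skewSingle, Ring.lie_def, mul_sub, sub_mul, single_mul_single_same, mul_one,
    single_mul_single_of_ne, ne_eq, hab, hac, hbc, hab.symm, hac.symm, hbc.symm,
    not_false_eq_true]
  abel

lemma lie_skewSingle_skewSingle_of_right_eq {a b c : m} (hab : a ≠ b) (hac : a ≠ c)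
    (hbc : b ≠ c) :
    ⁅skewSingle (R := R) a c, skewSingle (R := R) b c⁆ = -skewSingle a b := by
  have h := lie_skewSingle_skewSingle_of_left_eq (R := R) hac.symm hbc.symm hab
  rwa [skewSingle_swap c a, skewSingle_swap c b, neg_lie, lie_neg, neg_neg]

lemma lie_single_add_single {a b c : m} (hac : a ≠ c) (hbc : b ≠ c) :
    ⁅single a c (1 : R) + single c a 1, (single b c 1 + single c b 1 : Matrix m m R)⁆
      = skewSingle a b := by
  by_cases hab : a = b
  · subst hab; simp [skewSingle]
  · simp [skewSingle, Ring.lie_def, add_mul, mul_add, hab, hac, hbc, Ne.symm hab, hac.symm,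
      hbc.symm]

lemma lie_skewSingle_sub_skewSingle_skewSingle_add_skewSingle {a b a' b' : m}
    (haa' : a ≠ a') (hab : a ≠ b) (hab' : a ≠ b') (ha'b : a' ≠ b) (ha'b' : a' ≠ b')
    (hbb' : b ≠ b') :
    ⁅skewSingle (R := R) a b - skewSingle a' b', skewSingle (R := R) a b' + skewSingle a' b⁆
      = (-2 : R) • (skewSingle a a' + skewSingle b b') := by
  rw [sub_lie, lie_add, lie_add,
    lie_skewSingle_skewSingle_of_left_eq hab hab' hbb',
    lie_skewSingle_skewSingle_of_right_eq haa' hab ha'b,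
    lie_skewSingle_skewSingle_of_right_eq haa'.symm ha'b' hab',
    lie_skewSingle_skewSingle_of_left_eq ha'b' ha'b hbb'.symm,
    skewSingle_swap a', skewSingle_swap b']
  module

end SkewSingle

lemma Vmat_eq_sum_skewSingle (n : ℕ) :
    Vmat n = ∑ i, skewSingle (Sum.inl (Sum.inr i)) (Sum.inl (Sum.inl i)) := by
  ext a b
  rcases a with (a | a) | a <;> rcases b with (b | b) | b <;>
    simp [Vmat, J0mat, skewSingle, Matrix.sum_apply, single_apply, one_apply, ite_and, eq_comm]

lemma Emat_eq_single_add_single (n : ℕ) (k : Fin n ⊕ Fin n) :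
    Emat n k = single (Sum.inl k) (Sum.inr 0) 1 + single (Sum.inr 0) (Sum.inl k) 1 := by
  ext (a | a) (b | b) <;> simp [Emat, single_apply, eq_comm, Fin.fin_one_eq_zero]

lemma lie_Emat_Emat (n : ℕ) (k l : Fin n ⊕ Fin n) :
    ⁅Emat n k, Emat n l⁆ = skewSingle (Sum.inl k) (Sum.inl l) := by
  rw [Emat_eq_single_add_single, Emat_eq_single_add_single]
  exact lie_single_add_single Sum.inl_ne_inr Sum.inl_ne_inr

lemma lie_Pmat_Qmat (n : ℕ) {i j : Fin n} (hij : i ≠ j) :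
    ⁅Pmat n i j, Qmat n i j⁆
      = -(skewSingle (Sum.inl (Sum.inl i)) (Sum.inl (Sum.inr i))
        + skewSingle (Sum.inl (Sum.inl j)) (Sum.inl (Sum.inr j))) := by
  have hsqrt : (Real.sqrt 2)⁻¹ * (Real.sqrt 2)⁻¹ = 2⁻¹ := by
    rw [← mul_inv, Real.mul_self_sqrt zero_le_two]
  rw [Pmat, Qmat, smul_lie, lie_smul, smul_smul, hsqrt, lie_Emat_Emat, lie_Emat_Emat,
    lie_Emat_Emat, lie_Emat_Emat,
    lie_skewSingle_sub_skewSingle_skewSingle_add_skewSingle (by simp) (by simpa) (by simp)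
      (by simp) (by simpa) (by simp), smul_smul]
  module

end

/-- V' = Σᵢ 2[Eᵢ, E_{i+n}] + Σ_{i<j} 2[P_{ij}, Q_{ij}] = (2n−4)·V in so(2n,1). -/
theorem stmt_13 (n : ℕ) :
    (∑ i : Fin n, (2:ℝ) • ⁅Emat n (Sum.inl i), Emat n (Sum.inr i)⁆)
      + ∑ i : Fin n, ∑ j ∈ Finset.univ.filter (fun j => i < j),
          (2:ℝ) • ⁅Pmat n i j, Qmat n i j⁆
      = (2*(n:ℝ) - 4) • Vmat n := by
  set J : Fin n → Matrix ((Fin n ⊕ Fin n) ⊕ Fin 1) ((Fin n ⊕ Fin n) ⊕ Fin 1) ℝ :=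
    fun i => skewSingle (Sum.inl (Sum.inl i)) (Sum.inl (Sum.inr i))
  have hV : Vmat n = -∑ i, J i := by
    rw [Vmat_eq_sum_skewSingle, ← neg_eq_iff_eq_neg, ← Finset.sum_neg_distrib]
    exact Finset.sum_congr rfl fun i _ => (skewSingle_swap _ _).symm
  have hPQ : ∑ i : Fin n, ∑ j ∈ Finset.univ.filter (fun j => i < j),
        (2:ℝ) • ⁅Pmat n i j, Qmat n i j⁆
      = -(2:ℝ) • ∑ i, ∑ j ∈ Finset.univ.filter (fun j => i < j), (J i + J j) := by
    simp only [Finset.smul_sum]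
    refine Finset.sum_congr rfl fun i _ => Finset.sum_congr rfl fun j hj => ?_
    rw [lie_Pmat_Qmat n (Finset.mem_filter.mp hj).2.ne, smul_neg, neg_smul]
  have hcount := sum_sum_filter_lt_add_add_sum J
  rw [← Nat.cast_smul_eq_nsmul ℝ] at hcount
  rw [hPQ, eq_sub_of_add_eq hcount, hV]
  simp only [lie_Emat_Emat, ← Finset.smul_sum]
  module
end
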